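/- arXiv:1905.06868 — 3 statements merged into one kernel-verified Lean document; each statement's English description precedes it below -/
import Mathlib

section
/- Let M be an indecomposable well-order and let ⟨L_n⟩_{n∈ℕ} be a sequence of linear orders such that each L_n order-embeds into M and the set {n ∈ ℕ : M order-embeds into L_n} is infinite. Then the lexicographic sum Σ_{n∈ℕ} L_n is order isomorphic to Σ_{n∈ℕ} M (i.e., to the lexicographic product ℕ ×ₗ M with ℕ most significant). -/
/-- A well-order `M` is *indecomposable* if for every `m : M`, `M` order-embeds into the
final segment `{x : M // m ≤ x}`. -/
def Indecomposable (M : Type*) [LinearOrder M] : Prop :=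
  ∀ m : M, Nonempty (M ↪o {x : M // m ≤ x})

/-!
Both sums are well-orders and each embeds into the other: `Σₗ n, L n` embeds fiberwise into
`Σₗ n, M`, and `Σₗ n, M` embeds into the subsum of `Σₗ n, L n` over the infinite set of indices
`n` with `M ↪o L n`, enumerated increasingly. Mutually embeddable well-orders are isomorphic,
since an embedding of well-orders collapses to an initial segment.
-/

theorem OrderEmbedding.nonempty_orderIso_of_wellFoundedLT {α β : Type*} [LinearOrder α]
    [LinearOrder β] [WellFoundedLT β] (f : α ↪o β) (g : β ↪o α) : Nonempty (α ≃o β) :=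
  have := f.wellFoundedLT
  ⟨.ofRelIsoLT (InitialSeg.antisymm f.ltEmbedding.collapse g.ltEmbedding.collapse)⟩

namespace Sigma.Lex

def embeddingOfFibers {ι κ : Type*} [LinearOrder ι] [Preorder κ] {α : ι → Type*}
    {β : κ → Type*} [∀ i, LinearOrder (α i)] [∀ j, Preorder (β j)]
    (g : ι ↪o κ) (f : ∀ i, α i ↪o β (g i)) : (Σₗ i, α i) ↪o Σₗ j, β j :=
  OrderEmbedding.ofStrictMono (fun p => toLex ⟨g (ofLex p).1, f _ (ofLex p).2⟩) <| by
    intro a b h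
    cases h with
    | left _ _ h => exact .left _ _ (g.lt_iff_lt.mpr h)
    | right _ _ h => exact .right _ _ ((f _).lt_iff_lt.mpr h)

def orderIsoProdLex (ι α : Type*) [Preorder ι] [Preorder α] : (Σₗ _ : ι, α) ≃o ι ×ₗ α where
  toEquiv := (ofLex.trans (Equiv.sigmaEquivProd ι α)).trans toLex
  map_rel_iff' := by
    simp only [Equiv.trans_apply, Equiv.sigmaEquivProd_apply, Prod.Lex.le_iff, ofLex_toLex,
      Sigma.Lex.le_def, eq_rec_constant, exists_prop]
    rfl

end Sigma.Lex

theorem statement3_general {M : Type*} [LinearOrder M] [WellFoundedLT M]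
    (L : ℕ → Type*) [∀ n, LinearOrder (L n)]
    (hemb : ∀ n, Nonempty (L n ↪o M))
    (hinf : {n : ℕ | Nonempty (M ↪o L n)}.Infinite) :
    Nonempty ((Σₗ n, L n) ≃o (ℕ ×ₗ M)) := by
  let sumM := Sigma.Lex.orderIsoProdLex ℕ M
  have toSumM : (Σₗ n, L n) ↪o Σₗ _ : ℕ, M :=
    Sigma.Lex.embeddingOfFibers (RelEmbedding.refl _) fun n => (hemb n).some
  let enum : ℕ ↪o ℕ := OrderEmbedding.ofStrictMono _ (Nat.nth_strictMono hinf)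
  have ofSumM : (Σₗ _ : ℕ, M) ↪o Σₗ n, L n :=
    Sigma.Lex.embeddingOfFibers enum fun i => (Nat.nth_mem_of_infinite hinf i).some
  exact OrderEmbedding.nonempty_orderIso_of_wellFoundedLT (toSumM.trans sumM.toOrderEmbedding)
    (sumM.symm.toOrderEmbedding.trans ofSumM)

/-- If `M` is an indecomposable well-order, every `L n` order-embeds into `M`, and `M`
order-embeds into infinitely many of the `L n`, then the lexicographic sum `Σ_{n∈ℕ} L n`
is order isomorphic to `Σ_{n∈ℕ} M`, i.e. to the lexicographic product `ℕ ×ₗ M`. -/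
theorem statement3 {M : Type*} [LinearOrder M] [WellFoundedLT M]
    (hM : Indecomposable M) (L : ℕ → Type*) [∀ n, LinearOrder (L n)]
    (hemb : ∀ n, Nonempty (L n ↪o M))
    (hinf : {n : ℕ | Nonempty (M ↪o L n)}.Infinite) :
    Nonempty ((Σₗ n, L n) ≃o (ℕ ×ₗ M)) :=
  statement3_general L hemb hinf
end

section
/- Let T be a nonempty well-founded tree on ℕ. Then the tree T^∞ is well-founded, its rank equals the rank of T, and there exists an injection f : T → T^∞ that maps the empty sequence to the empty sequence, preserves lengths of sequences, preserves the proper-prefix relation, preserves rank (rank_{T^∞}(f(σ)) = rank_T(σ) for all σ ∈ T), and preserves the Kleene–Brouwer order (σ <_KB τ implies f(σ) <_KB f(τ)). In particular, the Kleene–Brouwer order of T order-embeds into the Kleene–Brouwer order of T^∞. -/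
/-!
A node of `T^∞` is a chain of labelled proper extensions in `T`. Sending it to its last node
maps proper extensions to proper extensions, and every proper extension in `T` of that last
node lifts (append it with any label), so this map preserves rank; an infinite path in `T^∞`
yields one in `T` along the diagonal.
The embedding sends `σ` to the chain of its nonempty prefixes, labelled so that for a fixed
stem `s` the codes of the labelled nodes `s ++ [a]` increase with `a`; the position where
`σ` and `τ` first differ, which decides their KB comparison, is thus decided the same way in
`T^∞`. Since the KB order of `T` is trichotomous and that of `T^∞` asymmetric, preserving it
makes the map an order embedding.
-/

/-- A tree: a set of finite lists containing the empty list and closed under prefixes. -/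
def IsTree {α : Type*} (T : Set (List α)) : Prop :=
  [] ∈ T ∧ ∀ ⦃σ τ : List α⦄, σ <+: τ → τ ∈ T → σ ∈ T

/-- `T` has an infinite path: an infinite sequence all of whose finite initial
segments belong to `T`. -/
def HasInfPath {α : Type*} (T : Set (List α)) : Prop :=
  ∃ f : ℕ → α, ∀ k : ℕ, (List.range k).map f ∈ T

/-- The relation "τ properly extends σ" on a tree `T`. -/
def extRel {α : Type*} (T : Set (List α)) : T → T → Prop :=
  fun τ σ => σ.val <+: τ.val ∧ σ.val ≠ τ.val

/-- The rank of a node of a well-founded tree with respect to proper extension. -/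
noncomputable def treeRank {α : Type*} (T : Set (List α))
    (hwf : WellFounded (extRel T)) (σ : T) : Ordinal :=
  @IsWellFounded.rank _ (extRel T) ⟨hwf⟩ σ

/-- The Kleene–Brouwer order induced by a relation `r` on the alphabet:
`σ <_KB τ` iff `σ` properly extends `τ`, or at the first position where they differ the
entry of `σ` is `r`-below that of `τ`. -/
def KBLt {α : Type*} (r : α → α → Prop) (σ τ : List α) : Prop :=
  (τ <+: σ ∧ σ ≠ τ) ∨
    ∃ (i : ℕ) (h1 : i < σ.length) (h2 : i < τ.length),
      σ.take i = τ.take i ∧ r (σ.get ⟨i, h1⟩) (τ.get ⟨i, h2⟩)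

/-- The linear order of type ω on `List ℕ × ℕ`, transported from `ℕ` along the canonical
denumerable encoding. -/
def encLt (a b : List ℕ × ℕ) : Prop :=
  Encodable.encode a < Encodable.encode b

/-- The tree `T^∞` over the alphabet `List ℕ × ℕ`: finite sequences
`⟨(σ₀,n₀), …, (σₖ,nₖ)⟩` with `σ₀ ≠ []`, each `σⱼ ∈ T`, and each `σⱼ` a proper prefix of
`σⱼ₊₁` (the `nⱼ` arbitrary). -/
def inftyTree (T : Set (List ℕ)) : Set (List (List ℕ × ℕ)) :=
  {l | (∀ p ∈ l, p.1 ∈ T ∧ p.1 ≠ []) ∧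
       l.Chain' (fun p q => p.1 <+: q.1 ∧ p.1 ≠ q.1)}

section KleeneBrouwer

variable {α : Type*} {r : α → α → Prop}

@[simp] lemma kbLt_nil_left (τ : List α) : ¬ KBLt r [] τ := by
  rintro (⟨hp, hne⟩ | ⟨i, h1, -⟩)
  · exact hne (List.prefix_nil.mp hp).symm
  · exact Nat.not_lt_zero _ h1

@[simp] lemma kbLt_cons_nil (a : α) (σ : List α) : KBLt r (a :: σ) [] :=
  Or.inl ⟨List.nil_prefix, List.cons_ne_nil a σ⟩

@[simp] lemma kbLt_cons_cons {a b : α} {σ τ : List α} :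
    KBLt r (a :: σ) (b :: τ) ↔ r a b ∨ a = b ∧ KBLt r σ τ := by
  constructor
  · rintro (⟨hp, hne⟩ | ⟨_ | i, h1, h2, htake, hr⟩)
    · obtain ⟨rfl, hp'⟩ := List.cons_prefix_cons.mp hp
      exact Or.inr ⟨rfl, Or.inl ⟨hp', by simpa using hne⟩⟩
    · exact Or.inl hr
    · obtain ⟨rfl, htake'⟩ := List.cons_eq_cons.mp htake
      exact Or.inr ⟨rfl, Or.inr ⟨i, Nat.lt_of_succ_lt_succ h1, Nat.lt_of_succ_lt_succ h2,
        htake', hr⟩⟩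
  · rintro (hr | ⟨rfl, ⟨hp, hne⟩ | ⟨i, h1, h2, htake, hr⟩⟩)
    · exact Or.inr ⟨0, Nat.succ_pos _, Nat.succ_pos _, rfl, hr⟩
    · exact Or.inl ⟨List.cons_prefix_cons.mpr ⟨rfl, hp⟩, by simpa using hne⟩
    · exact Or.inr ⟨i + 1, Nat.succ_lt_succ h1, Nat.succ_lt_succ h2, by simpa using htake, hr⟩

instance [Std.Asymm r] : Std.Asymm (KBLt r) where
  asymm σ τ := by
    induction σ generalizing τ with
    | nil => simp
    | cons a σ ih =>
      cases τ with
      | nil => simp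
      | cons b τ =>
        rw [kbLt_cons_cons, kbLt_cons_cons]
        rintro (hab | ⟨rfl, h⟩) (hba | ⟨hba, h'⟩)
        · exact Std.Asymm.asymm _ _ hab hba
        · exact Std.Asymm.asymm _ _ hab (hba ▸ hab)
        · exact Std.Asymm.asymm _ _ hba hba
        · exact ih τ h h'

instance [Std.Trichotomous r] : Std.Trichotomous (KBLt r) where
  trichotomous σ τ := by
    induction σ generalizing τ with
    | nil => cases τ <;> simp
    | cons a σ ih =>
      cases τ with
      | nil => simp
      | cons b τ =>
        simp only [kbLt_cons_cons, not_or, not_and, List.cons.injEq]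
        rintro ⟨hab, h⟩ ⟨hba, h'⟩
        obtain rfl := Std.Trichotomous.trichotomous a b hab hba
        exact ⟨rfl, ih τ (h rfl) (h' rfl)⟩

end KleeneBrouwer

section Labelling

open Encodable

instance : Std.Asymm encLt := ⟨fun _ _ => lt_asymm⟩

lemma le_encode_prod_right {α : Type*} [Encodable α] (a : α) (n : ℕ) :
    n ≤ encode (a, n) := by
  rw [encode_prod_val, encode_nat]
  exact Nat.right_le_pair _ _

/- Each label exceeds the code of the previous labelled node (the pairing function
dominates its second argument), so the codes of `labelledNode s 0, labelledNode s 1, …`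
increase. -/
def stemLabel (s : List ℕ) : ℕ → ℕ
  | 0 => 0
  | a + 1 => encode (s ++ [a], stemLabel s a) + 1

def labelledNode (s : List ℕ) (a : ℕ) : List ℕ × ℕ := (s ++ [a], stemLabel s a)

lemma encLt_labelledNode (s : List ℕ) {a b : ℕ} (h : a < b) :
    encLt (labelledNode s a) (labelledNode s b) :=
  strictMono_nat_of_lt_succ (f := fun a => encode (labelledNode s a))
    (fun _ => (Nat.lt_succ_self _).trans_le (le_encode_prod_right _ _)) h

/-- The embedding `T → T^∞` is `labelledPrefixes []`: it lists the labelled nonempty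
prefixes of `σ`. -/
def labelledPrefixes : List ℕ → List ℕ → List (List ℕ × ℕ)
  | _, [] => []
  | s, a :: σ => labelledNode s a :: labelledPrefixes (s ++ [a]) σ

@[simp] lemma labelledPrefixes_nil (s : List ℕ) : labelledPrefixes s [] = [] := rfl

@[simp] lemma labelledPrefixes_cons (s : List ℕ) (a : ℕ) (σ : List ℕ) :
    labelledPrefixes s (a :: σ) = labelledNode s a :: labelledPrefixes (s ++ [a]) σ := rfl

@[simp] lemma length_labelledPrefixes (s σ : List ℕ) :
    (labelledPrefixes s σ).length = σ.length := by
  induction σ generalizing s <;> simp [*]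

lemma labelledPrefixes_append (s σ τ : List ℕ) :
    labelledPrefixes s (σ ++ τ) = labelledPrefixes s σ ++ labelledPrefixes (s ++ σ) τ := by
  induction σ generalizing s <;> simp [*]

lemma labelledPrefixes_prefix {s σ τ : List ℕ} (h : σ <+: τ) :
    labelledPrefixes s σ <+: labelledPrefixes s τ := by
  obtain ⟨ρ, rfl⟩ := h
  rw [labelledPrefixes_append]
  exact List.prefix_append _ _

lemma kbLt_labelledPrefixes {s σ τ : List ℕ} (h : KBLt (· < ·) σ τ) :
    KBLt encLt (labelledPrefixes s σ) (labelledPrefixes s τ) := by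
  induction σ generalizing s τ with
  | nil => simp at h
  | cons a σ ih =>
    cases τ with
    | nil => simp
    | cons b τ =>
      rcases kbLt_cons_cons.mp h with hab | ⟨rfl, hστ⟩
      · exact kbLt_cons_cons.mpr (Or.inl (encLt_labelledNode s hab))
      · exact kbLt_cons_cons.mpr (Or.inr ⟨rfl, ih hστ⟩)

lemma labelledPrefixes_mem_inftyTree {T : Set (List ℕ)} (hT : IsTree T) {s σ : List ℕ}
    (h : s ++ σ ∈ T) : labelledPrefixes s σ ∈ inftyTree T := by
  induction σ generalizing s with
  | nil => exact ⟨by simp, List.IsChain.nil⟩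
  | cons a σ ih =>
    obtain ⟨hmem, hchain⟩ := ih (s := s ++ [a]) (by simpa using h)
    refine ⟨?_, List.isChain_cons.mpr ⟨?_, hchain⟩⟩
    · intro p hp
      rcases List.mem_cons.mp hp with rfl | hp
      · exact ⟨hT.2 (by simp [labelledNode]) h, by simp [labelledNode]⟩
      · exact hmem p hp
    · cases σ <;> simp [labelledNode]

end Labelling

lemma List.IsPrefix.length_lt_of_ne {α : Type*} {p q : List α} (h : p <+: q) (hne : p ≠ q) :
    p.length < q.length :=
  h.length_le.lt_of_ne fun hl => hne (h.eq_of_length hl)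

lemma List.isPrefix_ne_trans {α : Type*} {p q r : List α} (h₁ : p <+: q ∧ p ≠ q)
    (h₂ : q <+: r ∧ q ≠ r) : p <+: r ∧ p ≠ r := by
  refine ⟨h₁.1.trans h₂.1, fun h => ?_⟩
  have := h₁.1.length_lt_of_ne h₁.2
  have := h₂.1.length_lt_of_ne h₂.2
  subst h
  omega

section LastNode

variable {T : Set (List ℕ)}

/-- The node of `T` reached by a node of `T^∞`; the root `[]` for the empty sequence. -/
def lastNode (l : List (List ℕ × ℕ)) : List ℕ := (l.getLastD ([], 0)).1

@[simp] lemma lastNode_nil : lastNode [] = [] := rfl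

@[simp] lemma lastNode_concat (l : List (List ℕ × ℕ)) (x : List ℕ × ℕ) :
    lastNode (l ++ [x]) = x.1 := by
  simp [lastNode]

lemma lastNode_labelledPrefixes (σ : List ℕ) : lastNode (labelledPrefixes [] σ) = σ := by
  rcases σ.eq_nil_or_concat' with rfl | ⟨σ, a, rfl⟩
  · rfl
  · simp [labelledPrefixes_append, labelledNode]

lemma lastNode_mem (hT : IsTree T) {l : List (List ℕ × ℕ)} (hl : l ∈ inftyTree T) :
    lastNode l ∈ T := by
  rcases l.eq_nil_or_concat' with rfl | ⟨l, x, rfl⟩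
  · exact hT.1
  · simpa using (hl.1 x (by simp)).1

lemma concat_mem_inftyTree {l : List (List ℕ × ℕ)} (hl : l ∈ inftyTree T) {τ : List ℕ}
    (hτ : τ ∈ T) (hpre : lastNode l <+: τ) (hne : lastNode l ≠ τ) (n : ℕ) :
    l ++ [(τ, n)] ∈ inftyTree T := by
  refine ⟨?_, hl.2.append (List.IsChain.singleton _) ?_⟩
  · intro p hp
    rcases List.mem_append.mp hp with hp | hp
    · exact hl.1 p hp
    · obtain rfl := List.mem_singleton.mp hp
      refine ⟨hτ, show τ ≠ [] from ?_⟩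
      rintro rfl
      exact hne (List.prefix_nil.mp hpre)
  · intro x hx y hy
    obtain ⟨l, rfl⟩ := List.getLast?_eq_some_iff.mp hx
    obtain rfl := Option.mem_some_iff.mp hy
    simpa using And.intro hpre hne

lemma lastNode_lt_lastNode {l l' : List (List ℕ × ℕ)} (hl' : l' ∈ inftyTree T)
    (hpre : l <+: l') (hne : l ≠ l') :
    lastNode l <+: lastNode l' ∧ lastNode l ≠ lastNode l' := by
  obtain ⟨m, rfl⟩ := hpre
  rcases m.eq_nil_or_concat' with rfl | ⟨m, y, rfl⟩
  · simp at hne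
  rcases l.eq_nil_or_concat' with rfl | ⟨l, x, rfl⟩
  · have hy := (hl'.1 y (by simp)).2
    simpa [eq_comm] using hy
  have : Trans (fun p q : List ℕ × ℕ => p.1 <+: q.1 ∧ p.1 ≠ q.1)
      (fun p q : List ℕ × ℕ => p.1 <+: q.1 ∧ p.1 ≠ q.1)
      (fun p q : List ℕ × ℕ => p.1 <+: q.1 ∧ p.1 ≠ q.1) :=
    ⟨List.isPrefix_ne_trans⟩
  have hxy := (List.pairwise_append.mp hl'.2.pairwise).2.2 x (by simp) y (by simp)
  simpa [← List.append_assoc] using hxy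

end LastNode

universe u

lemma IsWellFounded.rank_eq_rank_of_lift {α β : Type u} {r : α → α → Prop}
    {s : β → β → Prop} [IsWellFounded α r] [IsWellFounded β s] (φ : α → β)
    (map_rel : ∀ {a a'}, r a' a → s (φ a') (φ a))
    (lift_rel : ∀ {a b}, s b (φ a) → ∃ a', r a' a ∧ φ a' = b) (a : α) :
    rank r a = rank s (φ a) := by
  induction a using IsWellFounded.induction r with
  | _ a ih =>
    apply le_antisymm
    · rw [rank_eq r a]
      refine Ordinal.iSup_le fun ⟨a', h⟩ => ?_
      rw [ih a' h, Order.succ_le_iff]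
      exact rank_lt_of_rel (map_rel h)
    · rw [rank_eq s (φ a)]
      refine Ordinal.iSup_le fun ⟨b, h⟩ => ?_
      obtain ⟨a', h', rfl⟩ := lift_rel h
      rw [← ih a' h', Order.succ_le_iff]
      exact rank_lt_of_rel h'

lemma treeRank_inftyTree {T : Set (List ℕ)} (hT : IsTree T) (hTwf : WellFounded (extRel T))
    (hIwf : WellFounded (extRel (inftyTree T))) (l : inftyTree T) :
    treeRank (inftyTree T) hIwf l = treeRank T hTwf ⟨lastNode l, lastNode_mem hT l.2⟩ := by
  have : IsWellFounded T (extRel T) := ⟨hTwf⟩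
  have : IsWellFounded (inftyTree T) (extRel (inftyTree T)) := ⟨hIwf⟩
  refine IsWellFounded.rank_eq_rank_of_lift (r := extRel (inftyTree T)) (s := extRel T)
    (fun l => ⟨lastNode l, lastNode_mem hT l.2⟩)
    (fun {_ l'} h => lastNode_lt_lastNode l'.2 h.1 h.2) (fun {l τ} h => ?_) l
  refine ⟨⟨l.1 ++ [(τ.1, 0)], concat_mem_inftyTree l.2 τ.2 h.1 h.2 0⟩,
    ⟨List.prefix_append _ _, by simp⟩, Subtype.ext (lastNode_concat _ _)⟩

lemma hasInfPath_of_strictMono {α : Type*} {T : Set (List α)} (hT : IsTree T)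
    {g : ℕ → List α} (hgT : ∀ n, g n ∈ T)
    (hg : ∀ n, g n <+: g (n + 1) ∧ g n ≠ g (n + 1)) : HasInfPath T := by
  have hlen : ∀ n, n ≤ (g n).length := by
    intro n
    induction n with
    | zero => exact Nat.zero_le _
    | succ n ih => exact ih.trans_lt ((hg n).1.length_lt_of_ne (hg n).2)
  have hmono : ∀ {m n}, m ≤ n → g m <+: g n := by
    intro m n hmn
    induction n, hmn using Nat.le_induction with
    | base => exact List.prefix_refl _
    | succ n _ ih => exact ih.trans (hg n).1
  refine ⟨fun n => (g (n + 1))[n]'(hlen (n + 1)), fun k => ?_⟩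
  suffices (List.range k).map (fun n => (g (n + 1))[n]'(hlen (n + 1))) = (g k).take k from
    this ▸ hT.2 (List.take_prefix _ _) (hgT k)
  refine List.ext_getElem (by simp [hlen k]) fun i h₁ _ => ?_
  simp only [List.getElem_map, List.getElem_range, List.getElem_take]
  exact (hmono (by simpa using h₁)).getElem _

lemma not_hasInfPath_inftyTree {T : Set (List ℕ)} (hT : IsTree T) (hwf : ¬ HasInfPath T) :
    ¬ HasInfPath (inftyTree T) := by
  rintro ⟨f, hf⟩
  refine hwf (hasInfPath_of_strictMono hT (g := fun n => (f n).1)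
    (fun n => ((hf (n + 1)).1 (f n) (List.mem_map_of_mem (by simp))).1) fun n => ?_)
  have hchain : List.IsChain _ _ := (hf (n + 2)).2
  rw [List.isChain_map, List.isChain_range_succ] at hchain
  exact hchain n (Nat.lt_succ_self n)

/-- For a nonempty well-founded tree `T` on ℕ: `T^∞` is well-founded, its rank equals the
rank of `T`, and there is an injection `f : T → T^∞` sending root to root and preserving
length, proper prefixes, rank, and the Kleene–Brouwer order; in particular `KB(T)`
order-embeds into `KB(T^∞)`. -/
theorem statement5 (T : Set (List ℕ)) (hT : IsTree T) (hwf : ¬ HasInfPath T) :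
    ¬ HasInfPath (inftyTree T) ∧
    ∀ (hTwf : WellFounded (extRel T)) (hIwf : WellFounded (extRel (inftyTree T))),
      treeRank (inftyTree T) hIwf ⟨[], by simp [inftyTree]; exact List.IsChain.nil⟩ =
        treeRank T hTwf ⟨[], hT.1⟩ ∧
      ∃ f : T → (inftyTree T : Set (List (List ℕ × ℕ))),
        Function.Injective f ∧
        (f ⟨[], hT.1⟩).val = [] ∧
        (∀ σ : T, (f σ).val.length = σ.val.length) ∧
        (∀ σ τ : T, σ.val <+: τ.val → σ.val ≠ τ.val →
          (f σ).val <+: (f τ).val ∧ (f σ).val ≠ (f τ).val) ∧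
        (∀ σ : T, treeRank (inftyTree T) hIwf (f σ) = treeRank T hTwf σ) ∧
        (∀ σ τ : T, KBLt (· < ·) σ.val τ.val → KBLt encLt (f σ).val (f τ).val) ∧
        Nonempty ((fun a b : T => KBLt (· < ·) a.val b.val) ↪r
                  (fun a b : inftyTree T => KBLt encLt a.val b.val)) := by
  refine ⟨not_hasInfPath_inftyTree hT hwf, fun hTwf hIwf => ?_⟩
  let f : T → inftyTree T := fun σ =>
    ⟨labelledPrefixes [] σ, labelledPrefixes_mem_inftyTree hT (by simp)⟩
  have hlast (σ : T) : (⟨lastNode (f σ), lastNode_mem hT (f σ).2⟩ : T) = σ :=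
    Subtype.ext (lastNode_labelledPrefixes σ)
  have hf : Function.Injective f := fun σ τ h => by rw [← hlast σ, ← hlast τ, h]
  have hkb (σ τ : T) (h : KBLt (· < ·) σ.val τ.val) : KBLt encLt (f σ).val (f τ).val :=
    kbLt_labelledPrefixes h
  have : Std.Trichotomous (fun a b : T => KBLt (· < ·) a.val b.val) :=
    ⟨fun a b h h' => Subtype.ext (Std.Trichotomous.trichotomous _ _ h h')⟩
  have : Std.Asymm (fun a b : inftyTree T => KBLt encLt a.val b.val) :=
    ⟨fun a b => Std.Asymm.asymm a.val b.val⟩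
  refine ⟨treeRank_inftyTree hT hTwf hIwf _, f, hf, rfl, fun σ => length_labelledPrefixes _ _,
    fun σ τ h hne => ⟨labelledPrefixes_prefix h, fun he => hne (congrArg Subtype.val
      (hf (Subtype.ext he)))⟩, fun σ => ?_, hkb, ⟨RelEmbedding.ofMonotone f hkb⟩⟩
  rw [treeRank_inftyTree hT hTwf hIwf, hlast]
end

section
/- Let X ⊆ ℕ and let ⟨T_i : i ∈ X⟩ be trees, each of which is good, and let A = { i ∈ X : T_i codes the bit 1 }. Let S be the tree formed by combining ⟨T_i : i ∈ X⟩ at a root r, i.e., S = {r} ∪ { r ++ [c(i,j)] ++ σ : i ∈ X, j ∈ {0,1}, σ ∈ T_i }, where c is a fixed injection of ℕ × {0,1} into ℕ. Then S is good, and S codes the bit 0 if and only if A = X (i.e., iff every T_i codes the bit 1). -/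
/-- `(C, M)` is a König cover of the simple graph `G`. -/
def IsKonigCover {V : Type*} (G : SimpleGraph V) (C : Set V) (M : Set (Sym2 V)) : Prop :=
  M ⊆ G.edgeSet ∧
  (M.Pairwise fun e f => ∀ v, v ∈ e → v ∉ f) ∧
  (∀ e ∈ G.edgeSet, ∃ v ∈ e, v ∈ C) ∧
  (∀ e ∈ M, ∃! v, v ∈ e ∧ v ∈ C) ∧
  (∀ v ∈ C, ∃ e ∈ M, v ∈ e)

/-- A tree `T ⊆ List ℕ` viewed as a graph: edges join each `σ ∈ T` to its one-step
extensions in `T`. -/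
def treeGraph (T : Set (List ℕ)) : SimpleGraph (List ℕ) where
  Adj s t := s ∈ T ∧ t ∈ T ∧ ((∃ n, t = s ++ [n]) ∨ ∃ n, s = t ++ [n])
  symm := by
    constructor
    rintro s t ⟨hs, ht, h | h⟩
    · exact ⟨ht, hs, Or.inr h⟩
    · exact ⟨ht, hs, Or.inl h⟩
  loopless := by
    constructor
    rintro s ⟨-, -, ⟨n, h⟩ | ⟨n, h⟩⟩ <;>
      simpa using congrArg List.length h

/-- The tree obtained by combining the trees `⟨T i : i ∈ X⟩` at a root `r`: two copies
of each `T i` are adjoined to `r`, using the injection `c(i, j) = 2 * i + j` of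
`ℕ × {0, 1}` into `ℕ`. -/
def combineAt (r : List ℕ) (X : Set ℕ) (T : ℕ → Set (List ℕ)) : Set (List ℕ) :=
  {r} ∪ {l | ∃ i ∈ X, ∃ j : Fin 2, ∃ σ ∈ T i, l = r ++ [2 * i + j] ++ σ}

/-- A rooted tree with root `r` codes the bit 1 if the root lies in the cover of every
König cover of it. -/
def CodesOne (r : List ℕ) (T : Set (List ℕ)) : Prop :=
  ∀ (C : Set (List ℕ)) (M : Set (Sym2 (List ℕ))),
    IsKonigCover (treeGraph T) C M → r ∈ C

/-- A rooted tree with root `r` codes the bit 0 if the root lies outside the cover of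
every König cover of it. -/
def CodesZero (r : List ℕ) (T : Set (List ℕ)) : Prop :=
  ∀ (C : Set (List ℕ)) (M : Set (Sym2 (List ℕ))),
    IsKonigCover (treeGraph T) C M → r ∉ C

/-- A rooted tree with root `r` is good if all of its König covers code the same bit. -/
def Good (r : List ℕ) (T : Set (List ℕ)) : Prop :=
  CodesOne r T ∨ CodesZero r T

/-!
Restricting a König cover of the combined tree to one copy of `T i` gives a König cover of `T i`,
unless the root of that copy is covered and matched to `r`. So if `r` is covered, its partner is
an uncovered copy root, which is impossible when every `T i` codes 1; and if `r` is uncovered,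
both copy roots of any `T i` are covered and at most one of them is matched to `r`, which is
impossible when that `T i` codes 0.

The two bits exclude each other because every tree has a König cover: cover by the vertices
outside a kernel `E` of the child relation, matching each of them to a child in `E`. Such a kernel
exists because the child relation raises the length by one: take the least fixed point `L` of the
square of `S ↦ {v | no child of v lies in S}`, and among the vertices that are neither in `L` nor
have a child in `L`, put those of even length into the kernel.
-/

section Kernel

variable {α : Type*} (R : α → α → Prop)

/-- A fixed point of `avoiders R` is a kernel of the digraph `R`. -/
def avoiders (S : Set α) : Set α := {v | ∀ u, R v u → u ∉ S}

variable {R}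

theorem antitone_avoiders : Antitone (avoiders R) :=
  fun _ _ hST _ hv u hu huS => hv u hu (hST huS)

theorem exists_avoiders_eq (ρ : α → ℕ) (hρ : ∀ v u, R v u → ρ u = ρ v + 1) :
    ∃ E, avoiders R E = E := by
  have hA := antitone_avoiders (R := R)
  let F : Set α →o Set α := ⟨avoiders R ∘ avoiders R, hA.comp hA⟩
  set L := F.lfp
  set G := avoiders R L
  have hL : avoiders R G = L := F.map_lfp
  have hLG : L ⊆ G := by
    have : L ≤ L ∩ G := F.lfp_le <| Set.subset_inter
      ((F.monotone Set.inter_subset_left).trans hL.le)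
      (hA (hL.symm.le.trans (hA Set.inter_subset_right)))
    exact this.trans Set.inter_subset_right
  set E := L ∪ {v | v ∈ G \ L ∧ Even (ρ v)}
  have hEG : E ⊆ G := Set.union_subset hLG fun v hv => hv.1.1
  refine ⟨E, Set.ext fun v => ?_⟩
  by_cases hvL : v ∈ L
  · exact iff_of_true (hA hEG (hL.symm.le hvL)) (Or.inl hvL)
  by_cases hvG : v ∈ G; swap
  · exact iff_of_false (fun hv => hvG (hA Set.subset_union_left hv)) (fun hv => hvG (hEG hv))
  have hchild : ∀ u, R v u → u ∉ L := hvG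
  obtain ⟨u, hvu, huG⟩ : ∃ u, R v u ∧ u ∈ G := by
    rw [← hL] at hvL
    simpa [avoiders] using hvL
  have hE : v ∈ E ↔ Even (ρ v) := by simp [E, hvL, hvG]
  rw [hE]
  constructor
  · intro hv
    by_contra hodd
    refine hv u hvu (Or.inr ⟨⟨huG, hchild u hvu⟩, ?_⟩)
    rw [hρ v u hvu, Nat.even_add_one]
    exact hodd
  · rintro heven w hvw (hwL | ⟨-, hw⟩)
    · exact hchild w hvw hwL
    · rw [hρ v w hvw, Nat.even_add_one] at hw
      exact hw heven

end Kernel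

namespace IsKonigCover

variable {V : Type*} {G : SimpleGraph V} {C : Set V} {M : Set (Sym2 V)}

theorem mem_or_mem_of_adj (h : IsKonigCover G C M) {a b : V} (hab : G.Adj a b) :
    a ∈ C ∨ b ∈ C := by
  obtain ⟨v, hv, hvC⟩ := h.2.2.1 s(a, b) hab
  rcases Sym2.mem_iff.mp hv with rfl | rfl
  exacts [Or.inl hvC, Or.inr hvC]

theorem right_notMem_of_left_mem (h : IsKonigCover G C M) {a b : V} (he : s(a, b) ∈ M)
    (ha : a ∈ C) : b ∉ C := by
  intro hb
  obtain ⟨v, -, huniq⟩ := h.2.2.2.1 _ he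
  have hab : a = b :=
    (huniq a ⟨Sym2.mem_mk_left _ _, ha⟩).trans (huniq b ⟨Sym2.mem_mk_right _ _, hb⟩).symm
  exact (h.1 he : G.Adj a b).ne hab

theorem eq_of_mem_of_mem (h : IsKonigCover G C M) {a b c : V} (hb : s(a, b) ∈ M)
    (hc : s(a, c) ∈ M) : b = c := by
  by_contra hbc
  refine h.2.1 hb hc (fun heq => hbc ?_) a (Sym2.mem_mk_left _ _) (Sym2.mem_mk_left _ _)
  exact Sym2.congr_right.mp heq

theorem comap {W : Type*} {H : SimpleGraph W} (f : H →g G) (hf : Function.Injective f)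
    (h : IsKonigCover G C M)
    (hM : ∀ v w, f v ∈ C → s(f v, w) ∈ M → ∃ w', H.Adj v w' ∧ f w' = w) :
    IsKonigCover H (f ⁻¹' C) {e | e ∈ H.edgeSet ∧ e.map f ∈ M} := by
  have hmap : ∀ {x : W} {e : Sym2 W}, f x ∈ e.map f ↔ x ∈ e := fun {x e} =>
    Sym2.mem_map.trans ⟨fun ⟨y, hy, hyx⟩ => hf hyx ▸ hy, fun hx => ⟨x, hx, rfl⟩⟩
  refine ⟨fun e he => he.1, ?_, ?_, ?_, ?_⟩
  · intro e he e' he' hne x hxe hxe'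
    exact h.2.1 he.2 he'.2 (fun heq => hne (Sym2.map.injective hf heq)) (f x)
      (hmap.mpr hxe) (hmap.mpr hxe')
  · intro e he
    obtain ⟨v, hv, hvC⟩ := h.2.2.1 _ (f.map_mem_edgeSet he)
    obtain ⟨x, hx, rfl⟩ := Sym2.mem_map.mp hv
    exact ⟨x, hx, hvC⟩
  · intro e he
    obtain ⟨v, ⟨hv, hvC⟩, huniq⟩ := h.2.2.2.1 _ he.2
    obtain ⟨x, hx, rfl⟩ := Sym2.mem_map.mp hv
    exact ⟨x, ⟨hx, hvC⟩, fun y hy => hf (huniq (f y) ⟨hmap.mpr hy.1, hy.2⟩)⟩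
  · intro v hv
    obtain ⟨e, heM, hve⟩ := h.2.2.2.2 (f v) hv
    obtain ⟨w, rfl⟩ := Sym2.mem_iff_exists.mp hve
    obtain ⟨w', hvw', rfl⟩ := hM v w hv heM
    exact ⟨s(v, w'), ⟨hvw', heM⟩, Sym2.mem_mk_left _ _⟩

end IsKonigCover

theorem exists_isKonigCover_treeGraph (U : Set (List ℕ)) :
    ∃ C M, IsKonigCover (treeGraph U) C M := by
  obtain ⟨E, hE⟩ := exists_avoiders_eq (R := fun v u => u ∈ U ∧ ∃ n, u = v ++ [n])
    List.length (by rintro v u ⟨-, n, rfl⟩; simp)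
  have hchild : ∀ v n, v ++ [n] ∈ U → v ∈ E → v ++ [n] ∉ E := fun v n hvn hv =>
    (hE ▸ hv : v ∈ avoiders _ E) _ ⟨hvn, n, rfl⟩
  have hmate : ∀ v ∈ U \ E, ∃ u, (u ∈ U ∧ ∃ n, u = v ++ [n]) ∧ u ∈ E := by
    rintro v ⟨-, hvE⟩
    rw [← hE] at hvE
    simpa [avoiders] using hvE
  choose! m hmU hmE using hmate
  have hcover : ∀ v n, v ∈ U → v ++ [n] ∈ U → v ∈ U \ E ∨ v ++ [n] ∈ U \ E := by
    intro v n hv hvn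
    by_cases hvE : v ∈ E
    exacts [Or.inr ⟨hvn, hchild v n hvn hvE⟩, Or.inl ⟨hv, hvE⟩]
  refine ⟨U \ E, (fun v => s(v, m v)) '' (U \ E), ?_, ?_, ?_, ?_, ?_⟩
  · rintro _ ⟨v, hv, rfl⟩
    obtain ⟨hmvU, n, hn⟩ := hmU v hv
    exact ⟨hv.1, hmvU, Or.inl ⟨n, hn⟩⟩
  · rintro _ ⟨v, hv, rfl⟩ _ ⟨w, hw, rfl⟩ hne x hxv hxw
    rcases Sym2.mem_iff.mp hxv with rfl | rfl <;> rcases Sym2.mem_iff.mp hxw with hxw | hxw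
    · exact hne (hxw ▸ rfl)
    · exact hv.2 (hxw ▸ hmE w hw)
    · exact hw.2 (hxw ▸ hmE v hv)
    · obtain ⟨n, hn⟩ := (hmU v hv).2
      obtain ⟨n', hn'⟩ := (hmU w hw).2
      rw [hn, hn'] at hxw
      exact hne ((List.append_inj' hxw rfl).1 ▸ rfl)
  · intro e he
    induction e using Sym2.ind with
    | _ a b =>
      rw [SimpleGraph.mem_edgeSet] at he
      obtain ⟨ha, hb, ⟨n, rfl⟩ | ⟨n, rfl⟩⟩ := he
      · exact (hcover a n ha hb).elim (⟨a, Sym2.mem_mk_left _ _, ·⟩)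
          (⟨_, Sym2.mem_mk_right _ _, ·⟩)
      · exact (hcover b n hb ha).elim (⟨b, Sym2.mem_mk_right _ _, ·⟩)
          (⟨_, Sym2.mem_mk_left _ _, ·⟩)
  · rintro _ ⟨v, hv, rfl⟩
    refine ⟨v, ⟨Sym2.mem_mk_left _ _, hv⟩, ?_⟩
    rintro y ⟨hy, hyC⟩
    rcases Sym2.mem_iff.mp hy with rfl | rfl
    · rfl
    · exact absurd (hmE v hv) hyC.2
  · intro v hv
    exact ⟨s(v, m v), ⟨v, hv, rfl⟩, Sym2.mem_mk_left _ _⟩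

theorem not_codesZero_of_codesOne {r : List ℕ} {U : Set (List ℕ)} (h : CodesOne r U) :
    ¬ CodesZero r U := fun h0 =>
  let ⟨C, M, hCM⟩ := exists_isKonigCover_treeGraph U
  h0 C M hCM (h C M hCM)

def treeGraphAppendHom {U V : Set (List ℕ)} (p : List ℕ) (h : ∀ σ ∈ U, p ++ σ ∈ V) :
    treeGraph U →g treeGraph V where
  toFun σ := p ++ σ
  map_rel' := by
    rintro σ τ ⟨hσ, hτ, ⟨n, rfl⟩ | ⟨n, rfl⟩⟩
    · exact ⟨h σ hσ, h _ hτ, Or.inl ⟨n, (List.append_assoc _ _ _).symm⟩⟩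
    · exact ⟨h _ hσ, h τ hτ, Or.inr ⟨n, (List.append_assoc _ _ _).symm⟩⟩

section combineAt

variable {r : List ℕ} {X : Set ℕ} {T : ℕ → Set (List ℕ)}

theorem prefix_of_mem_combineAt {l : List ℕ} (hl : l ∈ combineAt r X T) : r <+: l := by
  rcases hl with hl | ⟨i, -, j, σ, -, rfl⟩
  · exact (Set.mem_singleton_iff.mp hl).symm ▸ List.prefix_refl r
  · exact List.prefix_append_of_prefix (List.prefix_append _ _)

theorem append_mem_combineAt_iff {i : ℕ} {j : Fin 2} {σ : List ℕ} :
    r ++ [2 * i + j] ++ σ ∈ combineAt r X T ↔ i ∈ X ∧ σ ∈ T i := by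
  constructor
  · rintro (h | ⟨i', hi', j', σ', hσ', h⟩)
    · simpa using congrArg List.length (Set.mem_singleton_iff.mp h)
    · simp only [List.append_assoc, List.cons_append, List.nil_append, List.append_cancel_left_eq,
        List.cons.injEq] at h
      obtain ⟨hij, rfl⟩ := h
      obtain rfl : i = i' := by omega
      exact ⟨hi', hσ'⟩
  · rintro ⟨hi, hσ⟩
    exact Or.inr ⟨i, hi, j, σ, hσ, rfl⟩

theorem exists_eq_of_adj_root {t : List ℕ} (h : (treeGraph (combineAt r X T)).Adj r t) :
    ∃ i ∈ X, ∃ j : Fin 2, t = r ++ [2 * i + j] := by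
  obtain ⟨-, ht, ⟨n, rfl⟩ | ⟨n, rfl⟩⟩ := h
  · rcases ht with ht | ⟨i, hi, j, σ, -, heq⟩
    · simpa using congrArg List.length (Set.mem_singleton_iff.mp ht)
    · simp only [List.append_assoc, List.cons_append, List.nil_append, List.append_cancel_left_eq,
        List.cons.injEq] at heq
      obtain ⟨rfl, -⟩ := heq
      exact ⟨i, hi, j, rfl⟩
  · simpa using (prefix_of_mem_combineAt ht).length_le

theorem exists_adj_of_adj_append {i : ℕ} {j : Fin 2} {v w : List ℕ}
    (h : (treeGraph (combineAt r X T)).Adj (r ++ [2 * i + j] ++ v) w) (hw : w ≠ r) :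
    ∃ w', (treeGraph (T i)).Adj v w' ∧ r ++ [2 * i + j] ++ w' = w := by
  obtain ⟨hv, hwS, ⟨n, rfl⟩ | ⟨n, hn⟩⟩ := h
  · rw [List.append_assoc _ v] at hwS
    exact ⟨v ++ [n], ⟨(append_mem_combineAt_iff.mp hv).2, (append_mem_combineAt_iff.mp hwS).2,
      Or.inl ⟨n, rfl⟩⟩, (List.append_assoc _ _ _).symm⟩
  · rcases List.eq_nil_or_concat' v with rfl | ⟨v', n', rfl⟩
    · rw [List.append_nil] at hn
      exact absurd (List.append_inj' hn rfl).1.symm hw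
    · rw [← List.append_assoc] at hn
      obtain rfl := (List.append_inj' hn rfl).1
      exact ⟨v', ⟨(append_mem_combineAt_iff.mp hv).2, (append_mem_combineAt_iff.mp hwS).2,
        Or.inr ⟨n', rfl⟩⟩, rfl⟩

theorem IsKonigCover.exists_restrict_combineAt {C : Set (List ℕ)} {M : Set (Sym2 (List ℕ))}
    (h : IsKonigCover (treeGraph (combineAt r X T)) C M) {i : ℕ} (hi : i ∈ X) (j : Fin 2)
    (hroot : s(r, r ++ [2 * i + j]) ∈ M → r ++ [2 * i + j] ∉ C) :
    ∃ C' M', IsKonigCover (treeGraph (T i)) C' M' ∧ ([] ∈ C' ↔ r ++ [2 * i + j] ∈ C) := by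
  let f := treeGraphAppendHom (r ++ [2 * i + j]) fun σ hσ =>
    (append_mem_combineAt_iff (X := X) (T := T)).mpr ⟨hi, hσ⟩
  refine ⟨_, _, h.comap f (fun _ _ => List.append_cancel_left) ?_, by simp [f, treeGraphAppendHom]⟩
  intro v w (hv : r ++ [2 * i + j] ++ v ∈ C) (hvw : s(r ++ [2 * i + j] ++ v, w) ∈ M)
  by_cases hw : w = r
  · rw [hw] at hvw
    obtain ⟨_, -, _, hv'⟩ := exists_eq_of_adj_root (h.1 hvw).symm
    obtain rfl : v = [] := by simpa using congrArg List.length hv'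
    rw [List.append_nil, Sym2.eq_swap] at hvw
    exact absurd hv (by simpa using hroot hvw)
  · exact exists_adj_of_adj_append (h.1 hvw) hw

theorem codesZero_combineAt (hall : ∀ i ∈ X, CodesOne [] (T i)) :
    CodesZero r (combineAt r X T) := by
  intro C M h hrC
  obtain ⟨e, heM, hre⟩ := h.2.2.2.2 r hrC
  obtain ⟨t, rfl⟩ := Sym2.mem_iff_exists.mp hre
  obtain ⟨i, hi, j, rfl⟩ := exists_eq_of_adj_root (h.1 heM)
  have htC := h.right_notMem_of_left_mem heM hrC
  obtain ⟨C', M', h', hroot⟩ := h.exists_restrict_combineAt hi j fun _ => htC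
  exact htC (hroot.mp (hall i hi C' M' h'))

theorem codesOne_combineAt {i : ℕ} (hi : i ∈ X) (hnil : [] ∈ T i) (hzero : CodesZero [] (T i)) :
    CodesOne r (combineAt r X T) := by
  intro C M h
  by_contra hrC
  have hroot_mem : ∀ j : Fin 2, r ++ [2 * i + j] ∈ C := fun j =>
    (h.mem_or_mem_of_adj (a := r) ⟨Or.inl rfl,
      by simpa using (append_mem_combineAt_iff (σ := []) (j := j)).mpr ⟨hi, hnil⟩,
      Or.inl ⟨_, rfl⟩⟩).resolve_left hrC
  obtain ⟨j, hj⟩ : ∃ j : Fin 2, s(r, r ++ [2 * i + j]) ∉ M := by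
    by_contra! hM
    have := h.eq_of_mem_of_mem (hM 0) (hM 1)
    simp at this
  obtain ⟨C', M', h', hroot⟩ := h.exists_restrict_combineAt hi j fun hM => absurd hM hj
  exact hzero C' M' h' (hroot.mpr (hroot_mem j))

end combineAt

/-- If every tree `T i` (`i ∈ X`) is good, then their combination `S` at a root `r` is
good, and `S` codes the bit 0 iff every `T i` codes the bit 1 (i.e. iff
`A = {i ∈ X : T i codes 1}` equals `X`). -/
theorem statement13 (r : List ℕ) (X : Set ℕ) (T : ℕ → Set (List ℕ))
    (hT : ∀ i ∈ X, [] ∈ T i ∧ ∀ ⦃σ τ : List ℕ⦄, σ <+: τ → τ ∈ T i → σ ∈ T i)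
    (hgood : ∀ i ∈ X, Good [] (T i)) :
    Good r (combineAt r X T) ∧
    (CodesZero r (combineAt r X T) ↔ {i ∈ X | CodesOne [] (T i)} = X) := by
  rw [Set.sep_eq_self_iff_mem_true]
  by_cases hall : ∀ i ∈ X, CodesOne [] (T i)
  · have hS := codesZero_combineAt (r := r) hall
    exact ⟨Or.inr hS, iff_of_true hS hall⟩
  · obtain ⟨i, hi, hi1⟩ := not_forall₂.mp hall
    have hS : CodesOne r (combineAt r X T) :=
      codesOne_combineAt hi (hT i hi).1 ((hgood i hi).resolve_left hi1)
    exact ⟨Or.inl hS, iff_of_false (not_codesZero_of_codesOne hS) hall⟩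
end
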